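/- arXiv:1301.1466 — 3 statements merged into one kernel-verified Lean document; each statement's English description precedes it below -/
import Mathlib

section
/- Let d ≥ 1, g = 1/(2√d), and R ≥ 1/2. Partition ℝ^d into the axis-aligned grid cubes ∏_{j=1}^d [g·m_j, g·(m_j+1)] with m ∈ ℤ^d. Let P ⊆ ℝ^d be any set of points such that every grid cube entirely contained in the closed ball B_R contains at least one point of P. Then B_R ⊆ ⋃_{p ∈ P ∩ B_R} B̄_1(p), i.e. the closed unit balls centered at the points of P lying in B_R cover B_R. -/
open Metric Set

/-- The axis-aligned grid cube `∏_j [g·m_j, g·(m_j+1)]` in `ℝ^d`. -/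
def gridCube {d : ℕ} (g : ℝ) (m : Fin d → ℤ) : Set (EuclideanSpace ℝ (Fin d)) :=
  {x | ∀ j, x j ∈ Set.Icc (g * m j) (g * (m j + 1))}

lemma key_cover {d : ℕ} (hd : 1 ≤ d) (g : ℝ) (hg : g = 1 / (2 * Real.sqrt d))
    (R : ℝ) (hR : 1 / 2 ≤ R)
    (P : Set (EuclideanSpace ℝ (Fin d)))
    (hP : ∀ m : Fin d → ℤ,
      gridCube g m ⊆ closedBall (0 : EuclideanSpace ℝ (Fin d)) R →
        (P ∩ gridCube g m).Nonempty)
    (x y : EuclideanSpace ℝ (Fin d)) (hy : ‖y‖ ≤ R - 1/2) (hxy : dist x y ≤ 1/2) :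
    x ∈ ⋃ p ∈ P ∩ closedBall (0 : EuclideanSpace ℝ (Fin d)) R, closedBall p 1 := by
  have hsd : (0:ℝ) < Real.sqrt d := Real.sqrt_pos.mpr (by exact_mod_cast Nat.pos_of_ne_zero (by omega))
  have hgpos : 0 < g := by rw [hg]; positivity
  set m : Fin d → ℤ := fun j => ⌊y j / g⌋ with hm
  have hymem : y ∈ gridCube g m := by
    intro j
    constructor
    · have := Int.floor_le (y j / g)
      rw [mul_comm]
      exact (le_div_iff₀ hgpos).mp this
    · have := (Int.lt_floor_add_one (y j / g)).le
      rw [mul_comm]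
      exact (div_le_iff₀ hgpos).mp this
  -- any point of the cube is within 1/2 of y
  have hcube_close : ∀ z ∈ gridCube g m, dist z y ≤ 1/2 := by
    intro z hz
    have hdist : dist z y = Real.sqrt (∑ j, dist (z j) (y j) ^ 2) :=
      EuclideanSpace.dist_eq z y
    have hsum : (∑ j, dist (z j) (y j) ^ 2) ≤ ∑ _j : Fin d, g ^ 2 := by
      apply Finset.sum_le_sum
      intro j _
      have hj : dist (z j) (y j) ≤ g * (m j + 1) - g * m j :=
        Real.dist_le_of_mem_Icc (hz j) (hymem j)
      have hj' : dist (z j) (y j) ≤ g := by linarith [hj, (by ring : g * (m j + 1) - g * m j = g)]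
      exact pow_le_pow_left₀ dist_nonneg hj' 2
    have hsum' : (∑ j, dist (z j) (y j) ^ 2) ≤ d * g ^ 2 := by
      simpa using hsum
    have h1 : dist z y ≤ Real.sqrt (d * g ^ 2) := by
      rw [hdist]
      exact Real.sqrt_le_sqrt hsum'
    have h2 : Real.sqrt (d * g ^ 2) = Real.sqrt d * g := by
      rw [Real.sqrt_mul (by positivity), Real.sqrt_sq hgpos.le]
    have h3 : Real.sqrt d * g = 1/2 := by
      rw [hg]; field_simp
    calc dist z y ≤ Real.sqrt (d * g ^ 2) := h1
      _ = 1/2 := by rw [h2, h3]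
  have hcube_sub : gridCube g m ⊆ closedBall (0 : EuclideanSpace ℝ (Fin d)) R := by
    intro z hz
    rw [mem_closedBall, dist_zero_right]
    calc ‖z‖ = ‖y + (z - y)‖ := by congr 1; abel
      _ ≤ ‖y‖ + ‖z - y‖ := norm_add_le _ _
      _ ≤ (R - 1/2) + 1/2 := by
          have := hcube_close z hz
          rw [dist_eq_norm] at this
          linarith
      _ = R := by ring
  obtain ⟨p, hpP, hpc⟩ := hP m hcube_sub
  have hpR : p ∈ closedBall (0 : EuclideanSpace ℝ (Fin d)) R := hcube_sub hpc
  have hxp : dist x p ≤ 1 := by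
    calc dist x p ≤ dist x y + dist y p := dist_triangle _ _ _
      _ ≤ 1/2 + 1/2 := by
          have := hcube_close p hpc
          rw [dist_comm] at this
          linarith
      _ = 1 := by norm_num
  simp only [mem_iUnion, mem_closedBall]
  exact ⟨p, ⟨hpP, hpR⟩, hxp⟩

/-- With grid size `g = 1/(2√d)` and `R ≥ 1/2`: if every grid
cube contained in the closed ball `B_R` contains a point of `P`, then the closed
unit balls around the points of `P ∩ B_R` cover `B_R`. -/
theorem coverage_from_grid
    {d : ℕ} (hd : 1 ≤ d) (g : ℝ) (hg : g = 1 / (2 * Real.sqrt d))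
    (R : ℝ) (hR : 1 / 2 ≤ R)
    (P : Set (EuclideanSpace ℝ (Fin d)))
    (hP : ∀ m : Fin d → ℤ,
      gridCube g m ⊆ closedBall (0 : EuclideanSpace ℝ (Fin d)) R →
        (P ∩ gridCube g m).Nonempty) :
    closedBall (0 : EuclideanSpace ℝ (Fin d)) R ⊆
      ⋃ p ∈ P ∩ closedBall (0 : EuclideanSpace ℝ (Fin d)) R, closedBall p 1 := by
  intro x hx
  rw [mem_closedBall, dist_zero_right] at hx
  by_cases h : ‖x‖ ≤ R - 1/2
  · exact key_cover hd g hg R hR P hP x x h (by simp)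
  · push_neg at h
    have hx0 : 0 < ‖x‖ := lt_of_le_of_lt (by linarith) h
    set t : ℝ := (R - 1/2) / ‖x‖ with ht
    have ht0 : 0 ≤ t := div_nonneg (by linarith) hx0.le
    have ht1 : t ≤ 1 := by
      rw [ht, div_le_one hx0]; linarith
    set y : EuclideanSpace ℝ (Fin d) := t • x with hy
    have hny : ‖y‖ = R - 1/2 := by
      rw [hy, norm_smul, Real.norm_eq_abs, abs_of_nonneg ht0, ht,
        div_mul_cancel₀ _ hx0.ne']
    have hdxy : dist x y ≤ 1/2 := by
      have : x - y = (1 - t) • x := by rw [hy]; module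
      rw [dist_eq_norm, this, norm_smul, Real.norm_eq_abs, abs_of_nonneg (by linarith)]
      have : (1 - t) * ‖x‖ = ‖x‖ - (R - 1/2) := by
        rw [ht]; field_simp
      rw [this]; linarith
    exact key_cover hd g hg R hR P hP x y (le_of_eq hny) hdxy
end

section
/- Let d ≥ 1, g = 1/(2√d), and let X_1,…,X_n be i.i.d. random points in ℝ^d with common probability density f that is spherically symmetric (f(x) = φ(‖x‖) for some φ) and radially nonincreasing (φ is nonincreasing on [0,∞)). Let R_n > 0 and let Q_n be the collection of axis-aligned grid cubes ∏_{j=1}^d [g·m_j, g·(m_j+1)], m ∈ ℤ^d, contained in the closed ball B_{R_n}. Then the probability that some cube Q ∈ Q_n contains no sample point satisfies P(∃ Q ∈ Q_n : Q ∩ {X_1,…,X_n} = ∅) ≤ (2/g)^d · R_n^d · exp(−n·g^d·φ(R_n)). -/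
open MeasureTheory ProbabilityTheory Metric Set

lemma gridCube_eq {d : ℕ} (g : ℝ) (m : Fin d → ℤ) :
    gridCube g m = ((MeasurableEquiv.toLp 2 (Fin d → ℝ)).symm) ⁻¹'
      (Set.univ.pi fun j => Set.Icc (g * m j) (g * (m j + 1))) := by
  ext x
  simp only [gridCube, Set.mem_preimage, Set.mem_pi, Set.mem_univ, forall_true_left,
    mem_setOf_eq]
  exact Iff.rfl

lemma gridCube_meas {d : ℕ} (g : ℝ) (m : Fin d → ℤ) : MeasurableSet (gridCube g m) := by
  rw [gridCube_eq]
  exact ((MeasurableEquiv.toLp 2 (Fin d → ℝ)).symm).measurable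
    (MeasurableSet.univ_pi fun j => measurableSet_Icc)

lemma gridCube_vol {d : ℕ} {g : ℝ} (hg : 0 < g) (m : Fin d → ℤ) :
    volume (gridCube g m) = ENNReal.ofReal (g ^ d) := by
  rw [gridCube_eq,
    (EuclideanSpace.volume_preserving_symm_measurableEquiv_toLp (Fin d)).measure_preimage
      (MeasurableSet.univ_pi fun j => measurableSet_Icc).nullMeasurableSet,
    volume_pi_pi]
  have : ∀ j : Fin d, volume (Set.Icc (g * m j) (g * (m j + 1))) = ENNReal.ofReal g := by
    intro j
    rw [Real.volume_Icc]
    ring_nf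
  simp [this, Finset.prod_const, ← ENNReal.ofReal_pow hg.le]

lemma abs_coord_le_norm {d : ℕ} (x : EuclideanSpace ℝ (Fin d)) (j : Fin d) : |x j| ≤ ‖x‖ := by
  rw [EuclideanSpace.norm_eq, ← Real.sqrt_sq_eq_abs]
  apply Real.sqrt_le_sqrt
  simp only [Real.norm_eq_abs, sq_abs]
  exact Finset.single_le_sum (f := fun k => x k ^ 2) (fun k _ => sq_nonneg _)
    (Finset.mem_univ j)

open ENNReal

/-- For i.i.d. samples from a spherically symmetric, radially
nonincreasing density `f(x) = φ(‖x‖)` on `ℝ^d`, and grid size `g = 1/(2√d)`,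
the probability that some grid cube contained in `B_{R_n}` is devoid of sample
points is at most `(2/g)^d · R_n^d · exp(-n·g^d·φ(R_n))`. -/
theorem empty_cube_probability_bound
    {d : ℕ} (hd : 1 ≤ d) (g : ℝ) (hg : g = 1 / (2 * Real.sqrt d))
    (φ : ℝ → ℝ) (hmono : AntitoneOn φ (Set.Ici 0))
    {Ω : Type*} [MeasureSpace Ω] [IsProbabilityMeasure (volume : Measure Ω)]
    (n : ℕ) (X : Fin n → Ω → EuclideanSpace ℝ (Fin d))
    (hmeas : ∀ i, Measurable (X i))
    (hindep : iIndepFun X volume)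
    (hdist : ∀ i, Measure.map (X i) volume =
      (volume : Measure (EuclideanSpace ℝ (Fin d))).withDensity
        (fun x => ENNReal.ofReal (φ ‖x‖)))
    (R : ℝ) (hRpos : 0 < R) :
    volume {ω : Ω | ∃ m : Fin d → ℤ,
        gridCube g m ⊆ closedBall (0 : EuclideanSpace ℝ (Fin d)) R ∧
        ∀ i : Fin n, X i ω ∉ gridCube g m}
      ≤ ENNReal.ofReal ((2 / g) ^ d * R ^ d * Real.exp (-(n * g ^ d * φ R))) := by
  have hgpos : 0 < g := by
    rw [hg]
    have : (0:ℝ) < Real.sqrt d :=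
      Real.sqrt_pos.mpr (by exact_mod_cast Nat.pos_of_ne_zero (by omega))
    positivity
  set B := closedBall (0 : EuclideanSpace ℝ (Fin d)) R with hB
  set ν := (volume : Measure (EuclideanSpace ℝ (Fin d))).withDensity
    (fun x => ENNReal.ofReal (φ ‖x‖)) with hν
  set E := Real.exp (-(n * g ^ d * φ R)) with hE
  have hEnn : 0 ≤ E := Real.exp_nonneg _
  -- Key per-cube bound
  have key : ∀ m : Fin d → ℤ, gridCube g m ⊆ B →
      volume {ω : Ω | ∀ i : Fin n, X i ω ∉ gridCube g m} ≤ ENNReal.ofReal E := by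
    intro m hsub
    rcases Nat.eq_zero_or_pos n with hn | hn
    · subst hn
      simp only [hE, Nat.cast_zero, zero_mul, neg_zero, Real.exp_zero, ENNReal.ofReal_one]
      exact prob_le_one
    · set Q := gridCube g m with hQ
      set p := ν Q with hp
      have hprob : IsProbabilityMeasure ν := by
        rw [← hdist ⟨0, hn⟩]
        exact Measure.isProbabilityMeasure_map (hmeas _).aemeasurable
      have hp1 : p ≤ 1 := prob_le_one
      -- lower bound on p
      have hplow : ENNReal.ofReal (g ^ d * φ R) ≤ p := by
        rw [hp, hν, withDensity_apply _ (gridCube_meas g m)]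
        calc ENNReal.ofReal (g ^ d * φ R)
            = ENNReal.ofReal (φ R) * volume Q := by
              rw [gridCube_vol hgpos m, ← ENNReal.ofReal_mul' (by positivity), mul_comm]
          _ = ∫⁻ _x in Q, ENNReal.ofReal (φ R) := (setLIntegral_const _ _).symm
          _ ≤ ∫⁻ x in Q, ENNReal.ofReal (φ ‖x‖) := by
              refine setLIntegral_mono' (gridCube_meas g m) ?_
              intro x hx
              apply ENNReal.ofReal_le_ofReal
              have hxR : ‖x‖ ≤ R := by
                have := hsub hx
                simpa [hB, dist_zero_right] using this
              exact hmono (mem_Ici.mpr (norm_nonneg x))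
                (mem_Ici.mpr (le_trans (norm_nonneg x) hxR)) hxR
      -- probability of missing the cube
      have hmiss : ∀ i : Fin n, volume (X i ⁻¹' Qᶜ) = 1 - p := by
        intro i
        have h1 : volume (X i ⁻¹' Qᶜ) = Measure.map (X i) volume Qᶜ :=
          (Measure.map_apply (hmeas i) (gridCube_meas g m).compl).symm
        rw [h1, hdist i, measure_compl (gridCube_meas g m) (measure_ne_top ν Q),
          measure_univ, ← hp]
      have hinter : {ω : Ω | ∀ i : Fin n, X i ω ∉ gridCube g m} = ⋂ i, X i ⁻¹' Qᶜ := by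
        ext ω; simp [hQ]
      rw [hinter, hindep.meas_iInter (fun i => ⟨Qᶜ, (gridCube_meas g m).compl, rfl⟩)]
      simp only [hmiss, Finset.prod_const, Finset.card_univ, Fintype.card_fin]
      -- (1 - p)^n ≤ ofReal E
      have hpt : g ^ d * φ R ≤ p.toReal := by
        rcases le_or_gt (g ^ d * φ R) 0 with h | h
        · exact le_trans h ENNReal.toReal_nonneg
        · calc g ^ d * φ R = (ENNReal.ofReal (g ^ d * φ R)).toReal := by
                rw [ENNReal.toReal_ofReal h.le]
            _ ≤ p.toReal := ENNReal.toReal_mono (ne_top_of_le_ne_top ENNReal.one_ne_top hp1) hplow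
      have h1p : 1 - p = ENNReal.ofReal (1 - p.toReal) := by
        rw [ENNReal.ofReal_sub _ ENNReal.toReal_nonneg, ENNReal.ofReal_one,
          ENNReal.ofReal_toReal (ne_top_of_le_ne_top ENNReal.one_ne_top hp1)]
      have hstep : 1 - p ≤ ENNReal.ofReal (Real.exp (-(g ^ d * φ R))) := by
        rw [h1p]
        apply ENNReal.ofReal_le_ofReal
        calc 1 - p.toReal ≤ Real.exp (-p.toReal) := by
              have := Real.add_one_le_exp (-p.toReal); linarith
          _ ≤ Real.exp (-(g ^ d * φ R)) := Real.exp_le_exp.mpr (by linarith)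
      calc (1 - p) ^ n ≤ (ENNReal.ofReal (Real.exp (-(g ^ d * φ R)))) ^ n :=
            pow_le_pow_left' hstep n
        _ = ENNReal.ofReal (Real.exp (-(g ^ d * φ R)) ^ n) :=
            (ENNReal.ofReal_pow (Real.exp_nonneg _) n).symm
        _ = ENNReal.ofReal E := by
            rw [← Real.exp_nat_mul, hE]
            ring_nf
  -- the index Finset
  set a : ℤ := ⌈-(R/g)⌉ with ha
  set b : ℤ := ⌊R/g - 1⌋ with hb
  set T := Fintype.piFinset (fun _ : Fin d => Finset.Icc a b) with hT
  have hmemT : ∀ m : Fin d → ℤ, gridCube g m ⊆ B → m ∈ T := by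
    intro m hsub
    rw [hT, Fintype.mem_piFinset]
    intro j
    rw [Finset.mem_Icc]
    set c1 : EuclideanSpace ℝ (Fin d) := WithLp.toLp 2 (fun j' => g * m j') with hc1def
    set c2 : EuclideanSpace ℝ (Fin d) := WithLp.toLp 2 (fun j' => g * (m j' + 1)) with hc2def
    have hc1 : c1 ∈ gridCube g m := by
      intro j'
      refine ⟨le_refl _, ?_⟩
      show g * (m j' : ℝ) ≤ g * ((m j' : ℝ) + 1)
      nlinarith [hgpos]
    have hc2 : c2 ∈ gridCube g m := by
      intro j'
      refine ⟨?_, le_refl _⟩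
      show g * (m j' : ℝ) ≤ g * ((m j' : ℝ) + 1)
      nlinarith [hgpos]
    have h1 : |g * (m j : ℝ)| ≤ R := by
      have hn1 : ‖c1‖ ≤ R := by simpa [hB, dist_zero_right] using hsub hc1
      exact le_trans (abs_coord_le_norm c1 j) hn1
    have h2 : |g * ((m j : ℝ) + 1)| ≤ R := by
      have hn2 : ‖c2‖ ≤ R := by simpa [hB, dist_zero_right] using hsub hc2
      exact le_trans (abs_coord_le_norm c2 j) hn2
    constructor
    · apply Int.ceil_le.mpr
      rw [neg_le, le_div_iff₀ hgpos]
      nlinarith [(abs_le.mp h1).1]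
    · apply Int.le_floor.mpr
      have hx : (m j : ℝ) + 1 ≤ R / g := by
        rw [le_div_iff₀ hgpos]
        nlinarith [(abs_le.mp h2).2]
      linarith
  -- union bound
  have hsubU : {ω : Ω | ∃ m : Fin d → ℤ,
        gridCube g m ⊆ B ∧ ∀ i : Fin n, X i ω ∉ gridCube g m} ⊆
      ⋃ m ∈ T, {ω : Ω | gridCube g m ⊆ B ∧ ∀ i : Fin n, X i ω ∉ gridCube g m} := by
    rintro ω ⟨m, hm1, hm2⟩
    exact Set.mem_biUnion (hmemT m hm1) ⟨hm1, hm2⟩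
  have hcard : (T.card : ℝ) ≤ (2 / g * R) ^ d := by
    have hIcc : ((Finset.Icc a b).card : ℝ) ≤ 2 / g * R := by
      rw [Int.card_Icc]
      have h2Rg : (0:ℝ) ≤ 2 / g * R := by positivity
      rcases le_or_gt (b + 1 - a) 0 with h | h
      · simp only [Int.toNat_of_nonpos h]
        simpa using h2Rg
      · have hcast : (((b + 1 - a).toNat : ℕ) : ℝ) = (b:ℝ) + 1 - a := by
          have := Int.toNat_of_nonneg h.le
          rw [show ((((b + 1 - a).toNat : ℕ)) : ℝ) = ((((b + 1 - a).toNat : ℕ) : ℤ) : ℝ) by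
            push_cast; ring, this]
          push_cast; ring
        rw [hcast]
        have hfl : (b : ℝ) ≤ R / g - 1 := Int.floor_le _
        have hce : -(R / g) ≤ (a : ℝ) := Int.le_ceil _
        calc ((b : ℝ) + 1 - a) ≤ 2 * (R / g) := by linarith
          _ = 2 / g * R := by ring
    calc (T.card : ℝ) = ((Finset.Icc a b).card : ℝ) ^ d := by
          rw [hT, Fintype.card_piFinset]
          push_cast
          simp [Finset.prod_const]
      _ ≤ (2 / g * R) ^ d := pow_le_pow_left₀ (by positivity) hIcc d
  calc volume {ω : Ω | ∃ m : Fin d → ℤ,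
        gridCube g m ⊆ B ∧ ∀ i : Fin n, X i ω ∉ gridCube g m}
      ≤ volume (⋃ m ∈ T, {ω : Ω | gridCube g m ⊆ B ∧ ∀ i : Fin n, X i ω ∉ gridCube g m}) :=
        measure_mono hsubU
    _ ≤ ∑ m ∈ T, volume {ω : Ω | gridCube g m ⊆ B ∧ ∀ i : Fin n, X i ω ∉ gridCube g m} :=
        measure_biUnion_finset_le T _
    _ ≤ ∑ _m ∈ T, ENNReal.ofReal E := by
        apply Finset.sum_le_sum
        intro m _
        by_cases hsub : gridCube g m ⊆ B
        · calc volume {ω : Ω | gridCube g m ⊆ B ∧ ∀ i : Fin n, X i ω ∉ gridCube g m}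
              ≤ volume {ω : Ω | ∀ i : Fin n, X i ω ∉ gridCube g m} :=
                measure_mono (fun ω hω => hω.2)
            _ ≤ ENNReal.ofReal E := key m hsub
        · have hemp : {ω : Ω | gridCube g m ⊆ B ∧ ∀ i : Fin n, X i ω ∉ gridCube g m} = ∅ := by
            ext ω; simp [hsub]
          simp [hemp]
    _ = (T.card : ℝ≥0∞) * ENNReal.ofReal E := by
        rw [Finset.sum_const, nsmul_eq_mul]
    _ ≤ ENNReal.ofReal ((2 / g * R) ^ d) * ENNReal.ofReal E := by
        apply mul_le_mul_left
        rw [← ENNReal.ofReal_natCast]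
        exact ENNReal.ofReal_le_ofReal hcard
    _ = ENNReal.ofReal ((2 / g) ^ d * R ^ d * E) := by
        rw [← ENNReal.ofReal_mul (by positivity), mul_pow]
end

section
/- Let d ≥ 1 and let X_1,…,X_n be i.i.d. random points in ℝ^d with the standard Gaussian density f_g. Fix ε > 0 and set R_n = sqrt(2·log n + (d−2+ε)·log log n). Let β_{0,n} be the number of connected components of the proximity graph G_n(R_n). Then lim_{n→∞} E[β_{0,n}] = 0; indeed lim_{n→∞} E[S_{0,n}] = 0, where S_{0,n} = #{i ≤ n : ‖X_i‖ > R_n}. -/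
open MeasureTheory ProbabilityTheory Filter Topology

noncomputable section

open Set

lemma card_integral {Ω : Type*} [MeasureSpace Ω] [IsProbabilityMeasure (volume : Measure Ω)]
    {E : Type*} [MeasurableSpace E] (n : ℕ) (X : ℕ → Ω → E) (hmeas : ∀ i, Measurable (X i))
    (S : Set E) (hS : MeasurableSet S) :
    ∫ ω, (Nat.card {i : Fin n // X (i : ℕ) ω ∈ S} : ℝ)
      = ∑ i : Fin n, ((Measure.map (X (i : ℕ)) volume) S).toReal := by
  classical
  have hfun : ∀ ω, (Nat.card {i : Fin n // X (i : ℕ) ω ∈ S} : ℝ)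
      = ∑ i : Fin n, Set.indicator {ω | X (i : ℕ) ω ∈ S} (fun _ => (1:ℝ)) ω := by
    intro ω
    rw [Nat.card_eq_fintype_card, Fintype.card_subtype]
    rw [Finset.card_filter]
    push_cast
    refine Finset.sum_congr rfl fun i _ => ?_
    by_cases h : X (i : ℕ) ω ∈ S <;> simp [h, Set.indicator]
  have hint : ∀ i : Fin n, Integrable
      (Set.indicator {ω | X (i : ℕ) ω ∈ S} (fun _ => (1:ℝ))) volume :=
    fun i => (integrable_const (1:ℝ)).indicator (hmeas i hS)
  calc ∫ ω, (Nat.card {i : Fin n // X (i : ℕ) ω ∈ S} : ℝ)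
      = ∫ ω, ∑ i : Fin n, Set.indicator {ω | X (i : ℕ) ω ∈ S} (fun _ => (1:ℝ)) ω := by
        simp_rw [hfun]
    _ = ∑ i : Fin n, ∫ ω, Set.indicator {ω | X (i : ℕ) ω ∈ S} (fun _ => (1:ℝ)) ω := by
        exact integral_finset_sum _ fun i _ => hint i
    _ = ∑ i : Fin n, ((Measure.map (X (i : ℕ)) volume) S).toReal := by
        refine Finset.sum_congr rfl fun i _ => ?_
        rw [Measure.map_apply (hmeas i) hS]
        exact integral_indicator_one (hmeas i hS)


lemma gauss_integrable (d : ℕ) :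
    Integrable (fun x : EuclideanSpace ℝ (Fin d) => Real.exp (-‖x‖^2/2)) := by
  have h := GaussianFourier.integrable_cexp_neg_mul_sq_norm_add_of_euclideanSpace
    (b := (1/2 : ℂ)) (by norm_num) 0 (0 : EuclideanSpace ℝ (Fin d))
  have h2 := h.norm
  refine h2.congr (Filter.Eventually.of_forall fun x => ?_)
  simp only [zero_mul, add_zero, Complex.norm_exp]
  congr 1
  have : (-(1/2 : ℂ) * (‖x‖:ℂ)^2).re = -‖x‖^2/2 := by
    simp [← Complex.ofReal_pow]
    ring
  rw [this]

lemma tail_bound {d : ℕ} (hd : 1 ≤ d) {cg : ℝ} (hcg : 0 < cg) :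
    ∃ K : ℝ, ∀ R : ℝ, Real.sqrt (2*d) ≤ R →
    (((volume : Measure (EuclideanSpace ℝ (Fin d))).withDensity
        (fun x => ENNReal.ofReal (cg * Real.exp (-‖x‖^2/2)))) {x | R < ‖x‖}).toReal
      ≤ K * (R^(d-1) / R * Real.exp (-R^2/2)) := by
  set E := EuclideanSpace ℝ (Fin d)
  haveI : Nontrivial E := by
    apply Module.nontrivial_of_finrank_pos (R := ℝ)
    rw [finrank_euclideanSpace_fin]; omega
  set B : ℝ := ((volume : Measure E) (Metric.ball 0 1)).toReal with hB
  refine ⟨d * B * cg * 2, fun R hRs => ?_⟩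
  have hdR : (0:ℝ) < 2*d := by positivity
  have hR0 : 0 < R := lt_of_lt_of_le (Real.sqrt_pos.2 hdR) hRs
  have hR2 : (2*d : ℝ) ≤ R^2 := by
    rw [← Real.sq_sqrt hdR.le]
    exact pow_le_pow_left₀ (Real.sqrt_nonneg _) hRs 2
  have hd1 : ((d - 1 : ℕ) : ℝ) = (d:ℝ) - 1 := by
    rw [Nat.cast_sub hd]; norm_num
  set c : ℝ := R - ((d:ℝ)-1)/R with hc_def
  have hc : R/2 ≤ c := by
    have h1 : ((d:ℝ)-1)/R ≤ R/2 := by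
      rw [div_le_iff₀ hR0]
      have : (1:ℝ) ≤ d := by exact_mod_cast hd
      nlinarith
    simp only [hc_def]; linarith
  have hcpos : (0:ℝ) < c := lt_of_lt_of_le (by positivity) hc
  -- pointwise bound
  have hpt : ∀ y : ℝ, y ∈ Ioi R →
      y^(d-1) * (cg * Real.exp (-y^2/2))
        ≤ (cg * R^(d-1) * Real.exp (-R^2/2) * Real.exp (c*R)) * Real.exp (-(c*y)) := by
    intro y hy
    rw [Set.mem_Ioi] at hy
    have hy0 : 0 < y := hR0.trans hy
    have h1 : y^(d-1) ≤ R^(d-1) * Real.exp (((d:ℝ)-1)*(y/R-1)) := by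
      have hyR : y/R ≤ Real.exp (y/R - 1) := by
        have := Real.add_one_le_exp (y/R - 1); linarith
      calc y^(d-1) = R^(d-1) * (y/R)^(d-1) := by
            rw [div_pow]
            field_simp
        _ ≤ R^(d-1) * (Real.exp (y/R - 1))^(d-1) := by
            have h0 : (0:ℝ) ≤ y/R := by positivity
            exact mul_le_mul_of_nonneg_left (pow_le_pow_left₀ h0 hyR _) (by positivity)
        _ = R^(d-1) * Real.exp (((d:ℝ)-1)*(y/R-1)) := by
            rw [← Real.exp_nat_mul, hd1]
    have h2 : Real.exp (-y^2/2) ≤ Real.exp (-R^2/2 - R*(y-R)) := by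
      apply Real.exp_le_exp.2
      nlinarith [sq_nonneg (y - R)]
    calc y^(d-1) * (cg * Real.exp (-y^2/2))
        ≤ (R^(d-1) * Real.exp (((d:ℝ)-1)*(y/R-1))) * (cg * Real.exp (-R^2/2 - R*(y-R))) := by
          apply mul_le_mul h1 _ (by positivity) (by positivity)
          exact mul_le_mul_of_nonneg_left h2 hcg.le
      _ = (cg * R^(d-1)) * Real.exp ((((d:ℝ)-1)*(y/R-1)) + (-R^2/2 - R*(y-R))) := by
          rw [Real.exp_add]; ring
      _ = (cg * R^(d-1) * Real.exp (-R^2/2) * Real.exp (c*R)) * Real.exp (-(c*y)) := by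
          have hexp : (((d:ℝ)-1)*(y/R-1)) + (-R^2/2 - R*(y-R))
              = -R^2/2 + (c*R + -(c*y)) := by
            simp only [hc_def]
            field_simp
            ring
          rw [hexp, Real.exp_add, Real.exp_add]
          ring
  have hIexp : ∫ y in Ioi R, Real.exp (-(c*y)) = c⁻¹ * Real.exp (-(c*R)) := by
    have h := integral_comp_mul_left_Ioi (fun x => Real.exp (-x)) R hcpos
    simp only [smul_eq_mul] at h
    rw [h, integral_exp_neg_Ioi]
  have hIexpOn : IntegrableOn (fun y => Real.exp (-(c*y))) (Ioi R) := by
    have := exp_neg_integrableOn_Ioi R hcpos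
    simpa [neg_mul] using this
  have hIbound : ∫ y in Ioi R, y^(d-1) * (cg * Real.exp (-y^2/2))
      ≤ cg * R^(d-1) * Real.exp (-R^2/2) * (2/R) := by
    have hmono := integral_mono_of_nonneg (μ := volume.restrict (Ioi R))
      (f := fun y => y^(d-1) * (cg * Real.exp (-y^2/2)))
      (g := fun y => (cg * R^(d-1) * Real.exp (-R^2/2) * Real.exp (c*R)) * Real.exp (-(c*y)))
      ((ae_restrict_mem measurableSet_Ioi).mono fun y hy => by
        have hy0 : (0:ℝ) < y := hR0.trans hy
        positivity)
      (hIexpOn.const_mul _)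
      ((ae_restrict_mem measurableSet_Ioi).mono hpt)
    have h2c : c⁻¹ ≤ 2/R := by
      rw [show (2:ℝ)/R = (R/2)⁻¹ by rw [inv_div]]
      gcongr
    calc ∫ y in Ioi R, y^(d-1) * (cg * Real.exp (-y^2/2)) ≤ _ := hmono
      _ = (cg * R^(d-1) * Real.exp (-R^2/2) * Real.exp (c*R)) * (c⁻¹ * Real.exp (-(c*R))) := by
          rw [integral_const_mul, hIexp]
      _ = cg * R^(d-1) * Real.exp (-R^2/2) * c⁻¹ := by
          rw [Real.exp_neg]
          field_simp
      _ ≤ cg * R^(d-1) * Real.exp (-R^2/2) * (2/R) := by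
          exact mul_le_mul_of_nonneg_left h2c (by positivity)
  have hS : MeasurableSet {x : E | R < ‖x‖} := measurableSet_lt measurable_const measurable_norm
  have hv0 : 0 ≤ ∫ x in {x : E | R < ‖x‖}, cg * Real.exp (-‖x‖^2/2) :=
    setIntegral_nonneg hS fun x _ => by positivity
  have hmeq : (((volume : Measure E).withDensity
      (fun x => ENNReal.ofReal (cg * Real.exp (-‖x‖^2/2)))) {x | R < ‖x‖})
      = ENNReal.ofReal (∫ x in {x : E | R < ‖x‖}, cg * Real.exp (-‖x‖^2/2)) := by
    rw [withDensity_apply _ hS]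
    exact (ofReal_integral_eq_lintegral_ofReal
      (((gauss_integrable d).const_mul cg).integrableOn)
      (Filter.Eventually.of_forall fun x => by positivity)).symm
  rw [hmeq, ENNReal.toReal_ofReal hv0]
  set f : ℝ → ℝ := Set.indicator (Ioi R) (fun r => cg * Real.exp (-r^2/2)) with hf
  have e1 : ∫ x in {x : E | R < ‖x‖}, cg * Real.exp (-‖x‖^2/2) = ∫ x : E, f ‖x‖ := by
    rw [← integral_indicator hS]
    refine integral_congr_ae (Filter.Eventually.of_forall fun x => ?_)
    by_cases h : R < ‖x‖ <;> simp [hf, Set.indicator_apply, h, Set.mem_Ioi]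
  have e2 : ∫ x : E, f ‖x‖ = d • ((volume : Measure E) (Metric.ball 0 1)).toReal •
      ∫ y in Ioi 0, y^(d-1) • f y := by
    have h := integral_fun_norm_addHaar (volume : Measure E) f
    rwa [finrank_euclideanSpace_fin] at h
  have e3 : ∫ y in Ioi 0, y^(d-1) • f y = ∫ y in Ioi R, y^(d-1) * (cg * Real.exp (-y^2/2)) := by
    have hpt2 : ∀ y : ℝ, y^(d-1) • f y
        = Set.indicator (Ioi R) (fun y => y^(d-1) * (cg * Real.exp (-y^2/2))) y := by
      intro y
      by_cases h : y ∈ Ioi R <;> simp [hf, Set.indicator_apply, h, smul_eq_mul]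
    simp_rw [hpt2]
    rw [setIntegral_indicator measurableSet_Ioi, Set.Ioi_inter_Ioi, max_eq_right hR0.le]
  rw [e1, e2, e3, nsmul_eq_mul, smul_eq_mul]
  have hB0 : 0 ≤ B := ENNReal.toReal_nonneg
  calc (d:ℝ) * (B * (∫ y in Ioi R, y^(d-1) * (cg * Real.exp (-y^2/2))))
      ≤ (d:ℝ) * (B * (cg * R^(d-1) * Real.exp (-R^2/2) * (2/R))) := by
        exact mul_le_mul_of_nonneg_left (mul_le_mul_of_nonneg_left hIbound hB0) (by positivity)
    _ = (d:ℝ) * B * cg * 2 * (R^(d-1)/R * Real.exp (-R^2/2)) := by ring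


lemma asym {d : ℕ} (hd : 1 ≤ d) {ε : ℝ} (hε : 0 < ε) (K : ℝ) (p : ℝ → ℝ)
    (hp0 : ∀ r, 0 ≤ p r)
    (hpb : ∀ r, Real.sqrt (2*d) ≤ r → p r ≤ K * (r^(d-1)/r * Real.exp (-r^2/2)))
    (R : ℕ → ℝ)
    (hR : ∀ n : ℕ, R n = Real.sqrt (2*Real.log n + ((d:ℝ)-2+ε)*Real.log (Real.log n))) :
    Tendsto (fun n : ℕ => (n:ℝ) * p (R n)) atTop (𝓝 0) := by
  have hd1cast : ((d - 1 : ℕ) : ℝ) = (d:ℝ) - 1 := by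
    rw [Nat.cast_sub hd]; norm_num
  set a : ℝ := (d:ℝ) - 2 + ε with ha
  set K' : ℝ := max K 0 with hK'
  have hK'0 : 0 ≤ K' := le_max_right _ _
  have hpb' : ∀ r, Real.sqrt (2*d) ≤ r → 0 < r →
      p r ≤ K' * (r^(d-1)/r * Real.exp (-r^2/2)) := by
    intro r h hr0
    refine (hpb r h).trans (mul_le_mul_of_nonneg_right (le_max_left _ _) ?_)
    positivity
  set C : ℝ := K' * 3^(((d:ℝ)-1)/2) with hC
  have hlog : Tendsto (fun n : ℕ => Real.log n) atTop atTop :=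
    Real.tendsto_log_atTop.comp tendsto_natCast_atTop_atTop
  have hxfacts : ∀ᶠ x : ℝ in atTop, 1 ≤ x ∧ |a| * Real.log x ≤ x ∧ 2*(d:ℝ) ≤ x := by
    have h1 : ∀ᶠ x : ℝ in atTop, |a| * Real.log x ≤ x := by
      have h := Real.isLittleO_log_id_atTop.def (c := (|a|+1)⁻¹) (by positivity)
      filter_upwards [h, eventually_ge_atTop (1:ℝ)] with x hx hx1
      simp only [id_eq, Real.norm_eq_abs] at hx
      have habs : |x| = x := abs_of_pos (by linarith)
      rw [habs] at hx
      have h2 : |a| * (|a|+1)⁻¹ ≤ 1 := by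
        rw [← div_eq_mul_inv, div_le_one (by positivity)]; linarith [abs_nonneg a]
      calc |a| * Real.log x ≤ |a| * |Real.log x| :=
            mul_le_mul_of_nonneg_left (le_abs_self _) (abs_nonneg a)
        _ ≤ |a| * ((|a|+1)⁻¹ * x) := mul_le_mul_of_nonneg_left hx (abs_nonneg a)
        _ = (|a| * (|a|+1)⁻¹) * x := by ring
        _ ≤ 1 * x := mul_le_mul_of_nonneg_right h2 (by linarith)
        _ = x := one_mul x
    filter_upwards [h1, eventually_ge_atTop (1:ℝ), eventually_ge_atTop (2*(d:ℝ))] with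
      x h1 h2 h3
    exact ⟨h2, h1, h3⟩
  have hbound : ∀ᶠ n : ℕ in atTop, (n:ℝ) * p (R n) ≤ C * (Real.log n)^(-(ε/2)) := by
    filter_upwards [hlog.eventually hxfacts, eventually_ge_atTop 1] with n hn hn1
    set L : ℝ := Real.log n with hLdef
    obtain ⟨hL1, hLa, hLd⟩ := hn
    have hn0 : (0:ℝ) < (n:ℝ) := by exact_mod_cast hn1
    have hL0 : (0:ℝ) < L := lt_of_lt_of_le one_pos hL1
    have hlogL0 : 0 ≤ Real.log L := Real.log_nonneg hL1
    set In : ℝ := 2*L + a * Real.log L with hIn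
    have hub : In ≤ 3*L := by
      have h1 : a * Real.log L ≤ |a| * Real.log L :=
        mul_le_mul_of_nonneg_right (le_abs_self a) hlogL0
      simp only [hIn]; linarith
    have hlb : L ≤ In := by
      have h1 : -|a| * Real.log L ≤ a * Real.log L :=
        mul_le_mul_of_nonneg_right (neg_abs_le a) hlogL0
      simp only [hIn]; nlinarith
    have hIn0 : (0:ℝ) ≤ In := le_trans hL0.le hlb
    have hRn : R n = Real.sqrt In := by rw [hR n]
    have hR2 : (R n)^2 = In := by rw [hRn]; exact Real.sq_sqrt hIn0
    have hRlb : Real.sqrt L ≤ R n := by rw [hRn]; exact Real.sqrt_le_sqrt hlb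
    have hRub : R n ≤ Real.sqrt (3*L) := by rw [hRn]; exact Real.sqrt_le_sqrt hub
    have hRpos : 0 < R n := lt_of_lt_of_le (Real.sqrt_pos.2 hL0) hRlb
    have happ : Real.sqrt (2*(d:ℝ)) ≤ R n := le_trans (Real.sqrt_le_sqrt hLd) hRlb
    have hexp : Real.exp (-(R n)^2/2) = (n:ℝ)⁻¹ * L^(-(a/2)) := by
      rw [hR2]
      have h1 : -In/2 = -L + Real.log L * (-(a/2)) := by simp only [hIn]; ring
      rw [h1, Real.exp_add, Real.exp_neg, Real.exp_log hn0, ← Real.rpow_def_of_pos hL0]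
    have hpow : (R n)^(d-1) ≤ 3^(((d:ℝ)-1)/2) * L^(((d:ℝ)-1)/2) := by
      calc (R n)^(d-1) ≤ (Real.sqrt (3*L))^(d-1) := pow_le_pow_left₀ hRpos.le hRub _
        _ = (3*L)^((((d:ℝ))-1)/2) := by
            rw [Real.sqrt_eq_rpow, ← Real.rpow_natCast ((3*L)^((1:ℝ)/2)) (d-1),
              ← Real.rpow_mul (by positivity)]
            congr 1
            rw [hd1cast]; ring
        _ = 3^(((d:ℝ)-1)/2) * L^(((d:ℝ)-1)/2) := Real.mul_rpow (by norm_num) hL0.le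
    have hinv : (R n)⁻¹ ≤ L^(-(1/2:ℝ)) := by
      rw [Real.rpow_neg hL0.le, ← Real.sqrt_eq_rpow]
      exact inv_anti₀ (Real.sqrt_pos.2 hL0) hRlb
    have hfac : (R n)^(d-1) * (R n)⁻¹
        ≤ 3^(((d:ℝ)-1)/2) * L^(((d:ℝ)-1)/2) * L^(-(1/2:ℝ)) :=
      mul_le_mul hpow hinv (inv_nonneg.2 hRpos.le) (by positivity)
    calc (n:ℝ) * p (R n)
        ≤ (n:ℝ) * (K' * ((R n)^(d-1)/(R n) * Real.exp (-(R n)^2/2))) :=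
          mul_le_mul_of_nonneg_left (hpb' _ happ hRpos) (Nat.cast_nonneg n)
      _ = ((n:ℝ) * (n:ℝ)⁻¹) * (K' * ((R n)^(d-1) * (R n)⁻¹) * L^(-(a/2))) := by
          rw [hexp]; ring
      _ = K' * ((R n)^(d-1) * (R n)⁻¹) * L^(-(a/2)) := by
          rw [mul_inv_cancel₀ hn0.ne', one_mul]
      _ ≤ K' * (3^(((d:ℝ)-1)/2) * L^(((d:ℝ)-1)/2) * L^(-(1/2:ℝ))) * L^(-(a/2)) := by
          apply mul_le_mul_of_nonneg_right (mul_le_mul_of_nonneg_left hfac hK'0)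
          positivity
      _ = C * (L^(((d:ℝ)-1)/2) * L^(-(1/2:ℝ)) * L^(-(a/2))) := by
          simp only [hC]; ring
      _ = C * L^(-(ε/2)) := by
          rw [← Real.rpow_add hL0, ← Real.rpow_add hL0]
          congr 1
          simp only [ha]; ring
  have hzero : Tendsto (fun n : ℕ => C * (Real.log n)^(-(ε/2))) atTop (𝓝 0) := by
    have h : Tendsto (fun n : ℕ => (Real.log n)^(-(ε/2))) atTop (𝓝 0) :=
      (tendsto_rpow_neg_atTop (by positivity)).comp hlog
    simpa using h.const_mul C
  refine tendsto_of_tendsto_of_tendsto_of_le_of_le' tendsto_const_nhds hzero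
    (Eventually.of_forall fun n => mul_nonneg (Nat.cast_nonneg n) (hp0 _)) hbound

lemma card_integrable {Ω : Type*} [MeasureSpace Ω] [IsProbabilityMeasure (volume : Measure Ω)]
    {E : Type*} [MeasurableSpace E] (n : ℕ) (X : ℕ → Ω → E) (hmeas : ∀ i, Measurable (X i))
    (S : Set E) (hS : MeasurableSet S) :
    Integrable (fun ω => (Nat.card {i : Fin n // X (i : ℕ) ω ∈ S} : ℝ)) volume := by
  classical
  have hfun : ∀ ω, (Nat.card {i : Fin n // X (i : ℕ) ω ∈ S} : ℝ)
      = ∑ i : Fin n, Set.indicator {ω | X (i : ℕ) ω ∈ S} (fun _ => (1:ℝ)) ω := by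
    intro ω
    rw [Nat.card_eq_fintype_card, Fintype.card_subtype, Finset.card_filter]
    push_cast
    refine Finset.sum_congr rfl fun i _ => ?_
    by_cases h : X (i : ℕ) ω ∈ S <;> simp [h, Set.indicator]
  have : (fun ω => (Nat.card {i : Fin n // X (i : ℕ) ω ∈ S} : ℝ))
      = fun ω => ∑ i : Fin n, Set.indicator {ω | X (i : ℕ) ω ∈ S} (fun _ => (1:ℝ)) ω :=
    funext hfun
  rw [this]
  exact integrable_finset_sum _ fun i _ => (integrable_const (1:ℝ)).indicator (hmeas i hS)

/-- The number of connected components of the proximity graph whose vertices are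
the indices `i` with `‖X i‖ > R`, with an edge between distinct `i, j` whenever
`‖X i - X j‖ ≤ 2`. -/
noncomputable def betti0 {d n : ℕ} (X : Fin n → EuclideanSpace ℝ (Fin d)) (R : ℝ) : ℕ :=
  Nat.card ((SimpleGraph.fromRel fun i j : {i : Fin n // R < ‖X i‖} =>
    dist (X i.1) (X j.1) ≤ 2).ConnectedComponent)

/-- For i.i.d. samples from the standard Gaussian density
`f_g(x) = c_g·e^{-‖x‖²/2}` on `ℝ^d` (`c_g = (2π)^{-d/2}`), with
`R_n = sqrt(2·log n + (d-2+ε)·log log n)` (`ε > 0`), both `E[β_{0,n}] → 0` and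
`E[S_{0,n}] → 0`. -/
theorem gaussian_no_crackle
    {d : ℕ} (hd : 1 ≤ d) (cg : ℝ) (hcg : cg = (2 * Real.pi) ^ (-(d : ℝ) / 2))
    {Ω : Type*} [MeasureSpace Ω] [IsProbabilityMeasure (volume : Measure Ω)]
    (X : ℕ → Ω → EuclideanSpace ℝ (Fin d))
    (hmeas : ∀ i, Measurable (X i))
    (hindep : iIndepFun X volume)
    (hdist : ∀ i, Measure.map (X i) volume =
      (volume : Measure (EuclideanSpace ℝ (Fin d))).withDensity
        (fun x => ENNReal.ofReal (cg * Real.exp (-‖x‖ ^ 2 / 2))))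
    (ε : ℝ) (hε : 0 < ε)
    (R : ℕ → ℝ)
    (hR : ∀ n : ℕ, R n = Real.sqrt (2 * Real.log n + ((d : ℝ) - 2 + ε) * Real.log (Real.log n))) :
    Tendsto
      (fun n : ℕ => ∫ ω, (betti0 (fun i : Fin n => X (i : ℕ) ω) (R n) : ℝ))
      atTop (𝓝 0) ∧
    Tendsto
      (fun n : ℕ => ∫ ω, (Nat.card {i : Fin n // R n < ‖X (i : ℕ) ω‖} : ℝ))
      atTop (𝓝 0) := by
  have hcg0 : 0 < cg := by
    rw [hcg]; positivity
  set μg : Measure (EuclideanSpace ℝ (Fin d)) :=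
    (volume : Measure (EuclideanSpace ℝ (Fin d))).withDensity
      (fun x => ENNReal.ofReal (cg * Real.exp (-‖x‖ ^ 2 / 2))) with hμg
  set p : ℝ → ℝ := fun r => (μg {x | r < ‖x‖}).toReal with hp
  have hSmeas : ∀ r : ℝ, MeasurableSet {x : EuclideanSpace ℝ (Fin d) | r < ‖x‖} :=
    fun r => measurableSet_lt measurable_const measurable_norm
  have hp0 : ∀ r, 0 ≤ p r := fun r => ENNReal.toReal_nonneg
  obtain ⟨K, hK⟩ := tail_bound hd hcg0
  have hpb : ∀ r, Real.sqrt (2*d) ≤ r → p r ≤ K * (r^(d-1)/r * Real.exp (-r^2/2)) := by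
    intro r hr
    have := hK r hr
    simpa only [hp, hμg] using this
  have hkey : Tendsto (fun n : ℕ => (n:ℝ) * p (R n)) atTop (𝓝 0) :=
    asym hd hε K p hp0 hpb R hR
  have hEq : ∀ n : ℕ, ∫ ω, (Nat.card {i : Fin n // R n < ‖X (i : ℕ) ω‖} : ℝ)
      = (n:ℝ) * p (R n) := by
    intro n
    have h := card_integral n X hmeas {x | R n < ‖x‖} (hSmeas _)
    simp only [Set.mem_setOf_eq] at h
    rw [h]
    have : ∀ i : Fin n, ((Measure.map (X (i:ℕ)) volume) {x | R n < ‖x‖}).toReal = p (R n) := by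
      intro i
      rw [hdist (i:ℕ)]
    rw [Finset.sum_congr rfl fun i _ => this i, Finset.sum_const, Finset.card_univ,
      Fintype.card_fin, nsmul_eq_mul]
  have hsecond : Tendsto
      (fun n : ℕ => ∫ ω, (Nat.card {i : Fin n // R n < ‖X (i : ℕ) ω‖} : ℝ))
      atTop (𝓝 0) := by
    have : (fun n : ℕ => ∫ ω, (Nat.card {i : Fin n // R n < ‖X (i : ℕ) ω‖} : ℝ))
        = fun n : ℕ => (n:ℝ) * p (R n) := funext hEq
    rw [this]; exact hkey
  refine ⟨?_, hsecond⟩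
  -- first part by squeezing
  have hle : ∀ n : ℕ, ∫ ω, (betti0 (fun i : Fin n => X (i : ℕ) ω) (R n) : ℝ)
      ≤ ∫ ω, (Nat.card {i : Fin n // R n < ‖X (i : ℕ) ω‖} : ℝ) := by
    intro n
    have hint : Integrable (fun ω => (Nat.card {i : Fin n // R n < ‖X (i : ℕ) ω‖} : ℝ)) := by
      have h := card_integrable n X hmeas {x | R n < ‖x‖} (hSmeas _)
      simpa only [Set.mem_setOf_eq] using h
    refine integral_mono_of_nonneg (Filter.Eventually.of_forall fun ω => ?_) hint
      (Filter.Eventually.of_forall fun ω => ?_)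
    · exact Nat.cast_nonneg _
    · have hsurj : Function.Surjective
          (SimpleGraph.connectedComponentMk
            (SimpleGraph.fromRel fun i j : {i : Fin n // R n < ‖X (i : ℕ) ω‖} =>
              dist (X (i:ℕ) ω) (X (j:ℕ) ω) ≤ 2)) :=
        fun c => c.exists_rep
      have h2 := Nat.card_le_card_of_surjective _ hsurj
      simp only [betti0]
      exact_mod_cast h2
  refine tendsto_of_tendsto_of_tendsto_of_le_of_le' tendsto_const_nhds hsecond
    (Filter.Eventually.of_forall fun n => integral_nonneg fun ω => Nat.cast_nonneg _)
    (Filter.Eventually.of_forall hle)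
end
end
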